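/- arXiv:1501.06725 — 2 statements merged into one kernel-verified Lean document; each statement's English description precedes it below -/
import Mathlib

section
/- Let n : [0,∞) → ℝ≥0 and ϱ : [0,∞) → ℝ≥0 be differentiable with ϱ nondecreasing, ϱ(0) = 0, and suppose that for all 0 ≤ t₁ ≤ t₂: n̄(t₂) + ϱ(t₂) − n̄(t₁) − ϱ(t₁) = ∫_{t₁}^{t₂} (Q(ϱ(t)) − d) n̄(t) dt, where n̄ ≥ 0, Q is nonincreasing and d > lim_{ϱ→∞} Q(ϱ). Then ϱ is bounded: ϱ^∞ := lim_{t→∞} ϱ(t) < ∞. -/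
open MeasureTheory Filter Topology

/-- Proposition 1 of the paper: under the balance identity
`n̄(t₂) + ϱ(t₂) − n̄(t₁) − ϱ(t₁) = ∫_{t₁}^{t₂} (Q(ϱ) − d) n̄ dt`, with `n̄ ≥ 0`,
`ϱ` nondecreasing with `ϱ(0) = 0`, `Q` nonincreasing and `d > lim_{ϱ→∞} Q(ϱ)`,
the selected population `ϱ` converges to a finite limit. -/
theorem stmt_5 (n ϱ Q : ℝ → ℝ) (d Q1 : ℝ)
    (hn : ∀ t, 0 ≤ t → 0 ≤ n t)
    (hϱmono : MonotoneOn ϱ (Set.Ici 0))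
    (hϱdiff : Differentiable ℝ ϱ) (hndiff : Differentiable ℝ n)
    (hϱ0 : ϱ 0 = 0)
    (hQ : Antitone Q)
    (hQlim : Tendsto Q atTop (𝓝 Q1)) (hd : Q1 < d)
    (hbal : ∀ t₁ t₂ : ℝ, 0 ≤ t₁ → t₁ ≤ t₂ →
      n t₂ + ϱ t₂ - n t₁ - ϱ t₁ = ∫ t in t₁..t₂, (Q (ϱ t) - d) * n t) :
    ∃ L : ℝ, Tendsto ϱ atTop (𝓝 L) := by
  obtain ⟨x₀, hx₀⟩ : ∃ x, Q x < d := (hQlim.eventually (gt_mem_nhds hd)).exists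
  -- ϱ is bounded above on [0,∞)
  have key : ∃ C, ∀ t, 0 ≤ t → ϱ t ≤ C := by
    by_cases h : ∃ t₁, 0 ≤ t₁ ∧ x₀ ≤ ϱ t₁
    · obtain ⟨t₁, ht₁, hx⟩ := h
      refine ⟨n t₁ + ϱ t₁, fun t ht => ?_⟩
      rcases le_or_gt t t₁ with hle | hlt
      · have h1 : ϱ t ≤ ϱ t₁ := hϱmono ht ht₁ hle
        have h2 : 0 ≤ n t₁ := hn t₁ ht₁
        linarith
      · have hbal' := hbal t₁ t ht₁ hlt.le
        have hint : (∫ s in t₁..t, (Q (ϱ s) - d) * n s) ≤ 0 := by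
          have : 0 ≤ ∫ s in t₁..t, -((Q (ϱ s) - d) * n s) := by
            apply intervalIntegral.integral_nonneg hlt.le
            intro s hs
            have hs0 : (0:ℝ) ≤ s := ht₁.trans hs.1
            have h1 : Q (ϱ s) ≤ Q (ϱ t₁) := hQ (hϱmono ht₁ hs0 hs.1)
            have h2 : Q (ϱ t₁) ≤ Q x₀ := hQ hx
            have h3 : Q (ϱ s) - d ≤ 0 := by linarith
            have h4 : 0 ≤ n s := hn s hs0
            nlinarith
          rw [intervalIntegral.integral_neg] at this
          linarith
        have h2 : 0 ≤ n t := hn t ht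
        linarith
    · push_neg at h
      exact ⟨x₀, fun t ht => (h t ht).le⟩
  obtain ⟨C, hC⟩ := key
  set ψ : ℝ → ℝ := fun t => ϱ (max t 0) with hψ
  have hψmono : Monotone ψ := fun a b hab =>
    hϱmono (le_max_right a 0) (le_max_right b 0) (max_le_max hab le_rfl)
  have hbdd : BddAbove (Set.range ψ) := by
    refine ⟨C, ?_⟩
    rintro x ⟨t, rfl⟩
    exact hC _ (le_max_right t 0)
  refine ⟨⨆ t, ψ t, ?_⟩
  have hψtend : Tendsto ψ atTop (𝓝 (⨆ t, ψ t)) := tendsto_atTop_ciSup hψmono hbdd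
  refine hψtend.congr' ?_
  filter_upwards [eventually_ge_atTop (0:ℝ)] with t ht
  simp [hψ, max_eq_left ht]
end

section
/- For all x, z ∈ (0,1), t > 0, μ > 0 and b ∈ ℝ, the Neumann heat kernel on (0,1), given by G̃_b(t,x,z) = (e^{bt}/√(4πμt)) Σ_{n∈ℤ} [exp(−(x−2n+z)²/(4μt)) + exp(−(x−2n−z)²/(4μt))], satisfies G̃_b(t,x,z) ≥ exp(bt − (x+z)²/(4μt)) · [1/√(4πμt) + (1/(4√3)) erfc(√(3/(μt)))]. -/
/-!
Keep only the images `exp (-(x + z - 2n)² / (4μt))` with `n ≥ 0`. The term `n = 0` gives the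
first summand. For `n ≥ 1`, `(x + z - 2n)² ≤ (x + z)² + 12n²`, so the remaining terms dominate
`exp (-(x + z)² / (4μt)) · Σ_{n ≥ 1} exp (-3n² / (μt))`; by the integral test this Gaussian sum
dominates `∫₁^∞ exp (-3s² / (μt)) ds`, which the substitution `s ↦ √(3 / (μt)) s` turns into an
`erfc`.
-/

open MeasureTheory Real

/-- The complementary error function `erfc(y) = (2/√π) ∫_y^∞ e^{−s²} ds`. -/
noncomputable def erfc (y : ℝ) : ℝ :=
  (2 / Real.sqrt π) * ∫ s in Set.Ioi y, Real.exp (-s ^ 2)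

theorem integral_Ioi_exp_neg_mul_sq {β : ℝ} (hβ : 0 < β) (a : ℝ) :
    ∫ u in Set.Ioi a, exp (-β * u ^ 2) = √π / (2 * √β) * erfc (√β * a) := by
  have hsqrt : 0 < √β := sqrt_pos.2 hβ
  have hsub := integral_comp_mul_left_Ioi (fun s => exp (-s ^ 2)) a hsqrt
  simp only [mul_pow, sq_sqrt hβ.le, ← neg_mul, smul_eq_mul] at hsub
  rw [hsub, erfc]
  field_simp

theorem summable_exp_neg_mul_int_add_sq {β : ℝ} (hβ : 0 < β) (a : ℝ) :
    Summable fun n : ℤ => exp (-β * (n + a) ^ 2) :=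
  (HurwitzKernelBounds.summable_f_int 0 a (div_pos hβ pi_pos)).congr fun n => by
    simp only [HurwitzKernelBounds.f_int, pow_zero, one_mul]
    congr 1
    field_simp

theorem integral_Ioi_one_exp_neg_mul_sq_le_tsum {β : ℝ} (hβ : 0 < β) :
    ∫ u in Set.Ioi 1, exp (-β * u ^ 2) ≤ ∑' k : ℕ, exp (-β * (k + 1) ^ 2) := by
  have hanti : AntitoneOn (fun u : ℝ => exp (-β * u ^ 2)) (Set.Ici ((1 : ℕ) : ℝ)) :=
    fun u hu v _ huv => by
      have hu0 : (0 : ℝ) ≤ u := le_trans (by norm_num) hu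
      exact exp_le_exp.2 (by nlinarith [mul_le_mul huv huv hu0 (hu0.trans huv)])
  have hsum : Summable fun k : ℕ => exp (-β * (k : ℝ) ^ 2) :=
    ((summable_exp_neg_mul_int_add_sq hβ 0).comp_injective Nat.cast_injective).congr
      fun k => by simp
  simpa using hanti.integral_le_tsum_comp_add 1 hsum fun _ _ => (exp_pos _).le

theorem sqrt_pi_div_mul_erfc_le_tsum {β : ℝ} (hβ : 0 < β) :
    √π / (2 * √β) * erfc √β ≤ ∑' k : ℕ, exp (-β * (k + 1) ^ 2) := by
  have h := integral_Ioi_exp_neg_mul_sq hβ 1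
  rw [mul_one] at h
  exact h ▸ integral_Ioi_one_exp_neg_mul_sq_le_tsum hβ

theorem summable_exp_neg_sub_two_mul_sq_div {c : ℝ} (hc : 0 < c) (s : ℝ) :
    Summable fun n : ℤ => exp (-(s - 2 * n) ^ 2 / c) :=
  (summable_exp_neg_mul_int_add_sq (div_pos four_pos hc) (-s / 2)).congr fun n => by
    congr 1
    field_simp
    ring

theorem exp_neg_sq_div_mul_exp_le {c s y : ℝ} (hc : 0 < c) (hs : 0 ≤ s) (hy : 0 ≤ y) :
    exp (-s ^ 2 / c) * exp (-(12 / c) * y ^ 2) ≤ exp (-(s - 2 * y) ^ 2 / c) := by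
  rw [← exp_add, exp_le_exp]
  calc -s ^ 2 / c + -(12 / c) * y ^ 2 = -(s ^ 2 + 12 * y ^ 2) / c := by ring
    _ ≤ -(s - 2 * y) ^ 2 / c := by gcongr; nlinarith [mul_nonneg hs hy, sq_nonneg y]

theorem exp_mul_one_add_tsum_le_tsum_int {c s : ℝ} (hc : 0 < c) (hs : 0 ≤ s) :
    exp (-s ^ 2 / c) * (1 + ∑' k : ℕ, exp (-(12 / c) * (k + 1) ^ 2)) ≤
      ∑' n : ℤ, exp (-(s - 2 * n) ^ 2 / c) := by
  have hsum_int := summable_exp_neg_sub_two_mul_sq_div hc s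
  have hsum : Summable fun k : ℕ => exp (-(s - 2 * k) ^ 2 / c) :=
    (hsum_int.comp_injective Nat.cast_injective).congr fun k => by simp
  refine le_trans ?_ (hsum.tsum_le_tsum_of_inj _ Nat.cast_injective
    (fun _ _ => (exp_pos _).le) (fun k => by simp) hsum_int)
  have hsum_lower : Summable fun k : ℕ => exp (-(12 / c) * (k + 1) ^ 2) :=
    ((summable_exp_neg_mul_int_add_sq (div_pos (by norm_num : (0 : ℝ) < 12) hc) 1).comp_injective
      Nat.cast_injective).congr fun k => by simp
  rw [hsum.tsum_eq_zero_add, mul_add, mul_one, ← tsum_mul_left]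
  refine add_le_add (by simp) ((hsum_lower.mul_left _).tsum_le_tsum (fun k => ?_)
    ((summable_nat_add_iff 1).2 hsum))
  exact_mod_cast exp_neg_sq_div_mul_exp_le hc hs (by positivity : (0 : ℝ) ≤ k + 1)

theorem one_div_four_mul_sqrt_three_eq {μ t : ℝ} (hμ : 0 < μ) (ht : 0 < t) :
    1 / (4 * √3) = √π / (2 * √(3 / (μ * t))) / √(4 * π * μ * t) := by
  have hprod : √(3 / (μ * t)) * √(4 * π * μ * t) = 2 * √3 * √π := by
    rw [← sqrt_mul (by positivity), show 3 / (μ * t) * (4 * π * μ * t) = 2 ^ 2 * 3 * π by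
      field_simp; ring, sqrt_mul (by positivity), sqrt_mul (by positivity), sqrt_sq zero_le_two]
  rw [div_div, mul_assoc, hprod]
  field_simp
  ring

/-- Lemma 6 of the paper: lower bound for the Neumann heat kernel on `(0,1)` given by
the method of images. -/
theorem stmt_11 (μ b t x z : ℝ) (hμ : 0 < μ) (ht : 0 < t)
    (hx : x ∈ Set.Ioo (0:ℝ) 1) (hz : z ∈ Set.Ioo (0:ℝ) 1) :
    Real.exp (b * t - (x + z) ^ 2 / (4 * μ * t)) *
        (1 / Real.sqrt (4 * π * μ * t) + (1 / (4 * Real.sqrt 3)) *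
          erfc (Real.sqrt (3 / (μ * t)))) ≤
      (Real.exp (b * t) / Real.sqrt (4 * π * μ * t)) *
        ∑' n : ℤ, (Real.exp (-(x - 2 * (n : ℝ) + z) ^ 2 / (4 * μ * t)) +
          Real.exp (-(x - 2 * (n : ℝ) - z) ^ 2 / (4 * μ * t))) := by
  have hc : 0 < 4 * μ * t := by positivity
  have hs : 0 ≤ x + z := add_nonneg hx.1.le hz.1.le
  have hsumA := summable_exp_neg_sub_two_mul_sq_div hc (x + z)
  have hsumB := summable_exp_neg_sub_two_mul_sq_div hc (x - z)
  have hA_le : ∑' n : ℤ, exp (-(x + z - 2 * n) ^ 2 / (4 * μ * t)) ≤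
      ∑' n : ℤ, (exp (-(x - 2 * n + z) ^ 2 / (4 * μ * t)) +
        exp (-(x - 2 * n - z) ^ 2 / (4 * μ * t))) :=
    hsumA.tsum_le_tsum (fun n => by ring_nf; exact le_add_of_nonneg_right (exp_pos _).le)
      (hsumA.add hsumB |>.congr fun n => by ring_nf)
  have hrate : 3 / (μ * t) = 12 / (4 * μ * t) := by field_simp; ring
  calc _ = exp (b * t) / √(4 * π * μ * t) * (exp (-(x + z) ^ 2 / (4 * μ * t)) *
        (1 + √π / (2 * √(3 / (μ * t))) * erfc √(3 / (μ * t)))) := by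
        rw [one_div_four_mul_sqrt_three_eq hμ ht, sub_eq_add_neg, exp_add, neg_div]
        field_simp
    _ ≤ exp (b * t) / √(4 * π * μ * t) * (exp (-(x + z) ^ 2 / (4 * μ * t)) *
        (1 + ∑' k : ℕ, exp (-(12 / (4 * μ * t)) * (k + 1) ^ 2))) := by
        gcongr
        exact hrate ▸ sqrt_pi_div_mul_erfc_le_tsum (by positivity)
    _ ≤ _ := by
        gcongr
        exact (exp_mul_one_add_tsum_le_tsum_int hc hs).trans hA_le
end
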